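/- arXiv:2310.01182 — 3 statements merged into one kernel-verified Lean document; each statement's English description precedes it below -/
import Mathlib

section
/- Theorem 1 (descent property of the IRLS step of RODESSA, Tukey version): Let c1, c2 > 0 and set rho1(t) = rho_{c1}(sqrt(t)) and rho2(t) = rho_{c2}(sqrt(t)) for t >= 0, where rho_c is Tukey's biweight. Let x = (x_{ia}^{(j)}), theta and theta' be real arrays indexed by (i, j, a) with 1 <= i <= N, 1 <= j <= p, 1 <= a <= n_i, and put f(theta)_{ia}^{(j)} = (x_{ia}^{(j)} - theta_{ia}^{(j)})^2. If the weighted least squares objective with the weights computed at theta does not increase, i.e. sum over (i,j,a) of w_{ia}^{(j)}(f(theta)) * (x_{ia}^{(j)} - theta'_{ia}^{(j)})^2 <= sum over (i,j,a) of w_{ia}^{(j)}(f(theta)) * (x_{ia}^{(j)} - theta_{ia}^{(j)})^2, then L(f(theta')) <= L(f(theta)). In particular, each iteration of the IRLS algorithm decreases the objective function. -/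
open scoped BigOperators

/-- Tukey's biweight function `ρ_c`. -/
noncomputable def tukeyBiweight (c t : ℝ) : ℝ :=
  if |t| ≤ c then 1 - (1 - t ^ 2 / c ^ 2) ^ 3 else 1

/-- The function `t ↦ ρ_c(√t)`; for `t ≥ 0` this equals
`tukeyBiweight c (Real.sqrt t)`, i.e. `1 - (1 - t/c²)³` on `[0, c²]` and `1` beyond. -/
noncomputable def tukeySq (c t : ℝ) : ℝ :=
  if t ≤ c ^ 2 then 1 - (1 - t / c ^ 2) ^ 3 else 1

/-- The diagonal mean of squared residuals `r_i^{(j)}(f)`. -/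
noncomputable def rIJ {N p : ℕ} (n : Fin N → ℕ)
    (f : (i : Fin N) → Fin p → Fin (n i) → ℝ) (i : Fin N) (j : Fin p) : ℝ :=
  (∑ a : Fin (n i), f i j a) / (n i : ℝ)

/-- The casewise quantity `r_i(f)`. -/
noncomputable def rI {N p : ℕ} (n : Fin N → ℕ) (σ1 : Fin p → ℝ) (ρ1 : ℝ → ℝ)
    (f : (i : Fin N) → Fin p → Fin (n i) → ℝ) (i : Fin N) : ℝ :=
  (∑ j : Fin p, σ1 j ^ 2 * ρ1 (rIJ n f i j / σ1 j ^ 2)) / (p : ℝ)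

/-- The RODESSA weights `w_{ia}^{(j)}(f) = ρ₂'(r_i(f)/σ₂²) * ρ₁'(r_i^{(j)}(f)/σ_{1,j}²)`. -/
noncomputable def rodessaWeight {N p : ℕ} (n : Fin N → ℕ) (σ1 : Fin p → ℝ) (σ2 : ℝ)
    (ρ1 ρ1' ρ2' : ℝ → ℝ)
    (f : (i : Fin N) → Fin p → Fin (n i) → ℝ) (i : Fin N) (j : Fin p) : ℝ :=
  ρ2' (rI n σ1 ρ1 f i / σ2 ^ 2) * ρ1' (rIJ n f i j / σ1 j ^ 2)

/-- The composite RODESSA objective `L(f)`. -/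
noncomputable def Lobj {N p : ℕ} (n : Fin N → ℕ) (σ1 : Fin p → ℝ) (σ2 : ℝ)
    (ρ1 ρ2 : ℝ → ℝ) (f : (i : Fin N) → Fin p → Fin (n i) → ℝ) : ℝ :=
  ∑ i : Fin N, (p : ℝ) * (n i : ℝ) * σ2 ^ 2 *
    ρ2 ((∑ j : Fin p, (n i : ℝ) * σ1 j ^ 2 *
          ρ1 ((∑ a : Fin (n i), f i j a) / ((n i : ℝ) * σ1 j ^ 2))) /
        ((p : ℝ) * (n i : ℝ) * σ2 ^ 2))

/-! Both `ρ`'s are concave and nondecreasing, so each lies below its tangent lines. Applying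
this to `ρ₂` and then, inside, to `ρ₁` (each time in perspective form `u ρ(y/u)`) bounds
`L(g)` by `L(f) + ∑ w(f) (g - f)`: the IRLS weights are exactly the coefficients of this
linearisation of `L` at `f`. A step that does not increase the weighted sum therefore does not
increase `L`. -/

open Finset

section TangentBound

variable {φ₁ φ₁' φ₂ φ₂' : ℝ → ℝ}

lemma mul_comp_div_le_of_tangent (hφ : ∀ s t, φ₁ s ≤ φ₁ t + φ₁' t * (s - t))
    {u : ℝ} (hu : 0 < u) (x y : ℝ) :
    u * φ₁ (y / u) ≤ u * φ₁ (x / u) + φ₁' (x / u) * (y - x) := by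
  have hxy : u * (y / u - x / u) = y - x := by field_simp
  calc u * φ₁ (y / u) ≤ u * (φ₁ (x / u) + φ₁' (x / u) * (y / u - x / u)) :=
        mul_le_mul_of_nonneg_left (hφ _ _) hu.le
    _ = u * φ₁ (x / u) + φ₁' (x / u) * (y - x) := by rw [← hxy]; ring

lemma composite_le_add_of_tangent {ι α : Type*} [Fintype ι] [Fintype α]
    (h₁ : ∀ s t, φ₁ s ≤ φ₁ t + φ₁' t * (s - t)) (h₂ : ∀ s t, φ₂ s ≤ φ₂ t + φ₂' t * (s - t))
    (h₂' : ∀ t, 0 ≤ φ₂' t) {s : ι → ℝ} (hs : ∀ j, 0 < s j) {C : ℝ} (hC : 0 < C)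
    (F G : ι → α → ℝ) :
    C * φ₂ ((∑ j, s j * φ₁ ((∑ a, G j a) / s j)) / C)
      ≤ C * φ₂ ((∑ j, s j * φ₁ ((∑ a, F j a) / s j)) / C)
        + ∑ j, ∑ a, φ₂' ((∑ j, s j * φ₁ ((∑ a, F j a) / s j)) / C)
            * φ₁' ((∑ a, F j a) / s j) * (G j a - F j a) := by
  set inner : (ι → α → ℝ) → ℝ := fun H => ∑ j, s j * φ₁ ((∑ a, H j a) / s j)
  have inner_sub : inner G - inner F
      ≤ ∑ j, φ₁' ((∑ a, F j a) / s j) * (∑ a, G j a - ∑ a, F j a) := by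
    rw [← sum_sub_distrib]
    refine sum_le_sum fun j _ => ?_
    linarith [mul_comp_div_le_of_tangent h₁ (hs j) (∑ a, F j a) (∑ a, G j a)]
  calc C * φ₂ (inner G / C)
      ≤ C * φ₂ (inner F / C) + φ₂' (inner F / C) * (inner G - inner F) :=
        mul_comp_div_le_of_tangent h₂ hC _ _
    _ ≤ C * φ₂ (inner F / C)
          + φ₂' (inner F / C)
            * ∑ j, φ₁' ((∑ a, F j a) / s j) * (∑ a, G j a - ∑ a, F j a) := by
        gcongr
        exact h₂' _
    _ = _ := by simp only [inner, mul_sum, ← sum_sub_distrib, mul_assoc]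

end TangentBound

section Objective

variable {N p : ℕ} {n : Fin N → ℕ} {σ1 : Fin p → ℝ} {σ2 : ℝ}

lemma rI_div_sq_eq {i : Fin N} (hni : (n i : ℝ) ≠ 0) (ρ1 : ℝ → ℝ)
    (f : (i : Fin N) → Fin p → Fin (n i) → ℝ) :
    rI n σ1 ρ1 f i / σ2 ^ 2
      = (∑ j, (n i : ℝ) * σ1 j ^ 2 * ρ1 ((∑ a, f i j a) / ((n i : ℝ) * σ1 j ^ 2)))
          / ((p : ℝ) * (n i : ℝ) * σ2 ^ 2) := by
  simp only [rI, rIJ, div_div, mul_assoc, ← mul_sum]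
  rw [mul_left_comm (p : ℝ), mul_div_mul_left _ _ hni]

lemma Lobj_le_add_sum_weight_mul_sub (hp : 1 ≤ p) (hn : ∀ i, 1 ≤ n i)
    (hσ1 : ∀ j, 0 < σ1 j) (hσ2 : 0 < σ2) {ρ1 ρ1' ρ2 ρ2' : ℝ → ℝ}
    (h₁ : ∀ s t, ρ1 s ≤ ρ1 t + ρ1' t * (s - t)) (h₂ : ∀ s t, ρ2 s ≤ ρ2 t + ρ2' t * (s - t))
    (h₂' : ∀ t, 0 ≤ ρ2' t) (f g : (i : Fin N) → Fin p → Fin (n i) → ℝ) :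
    Lobj n σ1 σ2 ρ1 ρ2 g ≤ Lobj n σ1 σ2 ρ1 ρ2 f
      + ∑ i, ∑ j, ∑ a, rodessaWeight n σ1 σ2 ρ1 ρ1' ρ2' f i j * (g i j a - f i j a) := by
  rw [Lobj, Lobj, ← sum_add_distrib]
  refine sum_le_sum fun i _ => ?_
  have hni : (0 : ℝ) < n i := by have := hn i; positivity
  have hp' : (0 : ℝ) < p := by positivity
  simp only [rodessaWeight, rI_div_sq_eq hni.ne', rIJ, div_div]
  exact composite_le_add_of_tangent h₁ h₂ h₂' (s := fun j => (n i : ℝ) * σ1 j ^ 2)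
    (fun j => by have := hσ1 j; positivity) (by positivity) (f i) (g i)

theorem Lobj_le_of_sum_weight_mul_le (hp : 1 ≤ p) (hn : ∀ i, 1 ≤ n i)
    (hσ1 : ∀ j, 0 < σ1 j) (hσ2 : 0 < σ2) {ρ1 ρ1' ρ2 ρ2' : ℝ → ℝ}
    (h₁ : ∀ s t, ρ1 s ≤ ρ1 t + ρ1' t * (s - t)) (h₂ : ∀ s t, ρ2 s ≤ ρ2 t + ρ2' t * (s - t))
    (h₂' : ∀ t, 0 ≤ ρ2' t) (f g : (i : Fin N) → Fin p → Fin (n i) → ℝ)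
    (hW : ∑ i, ∑ j, ∑ a, rodessaWeight n σ1 σ2 ρ1 ρ1' ρ2' f i j * g i j a
      ≤ ∑ i, ∑ j, ∑ a, rodessaWeight n σ1 σ2 ρ1 ρ1' ρ2' f i j * f i j a) :
    Lobj n σ1 σ2 ρ1 ρ2 g ≤ Lobj n σ1 σ2 ρ1 ρ2 f := by
  refine (Lobj_le_add_sum_weight_mul_sub hp hn hσ1 hσ2 h₁ h₂ h₂' f g).trans ?_
  simp only [mul_sub, sum_sub_distrib]
  linarith

end Objective

section Tukey

variable {c : ℝ}

noncomputable def tukeySqDeriv (c t : ℝ) : ℝ :=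
  if t ≤ c ^ 2 then 3 * (1 - t / c ^ 2) ^ 2 / c ^ 2 else 0

lemma tukeySqDeriv_nonneg (c t : ℝ) : 0 ≤ tukeySqDeriv c t := by
  unfold tukeySqDeriv
  split_ifs <;> positivity

lemma hasDerivAt_tukeySq (hc : 0 < c) (t : ℝ) :
    HasDerivAt (tukeySq c) (tukeySqDeriv c t) t := by
  have hc2 : c ^ 2 ≠ 0 := by positivity
  have poly : ∀ t, HasDerivAt (fun u : ℝ => 1 - (1 - u / c ^ 2) ^ 3)
      (3 * (1 - t / c ^ 2) ^ 2 / c ^ 2) t := fun t => by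
    have inner := ((hasDerivAt_id t).div_const (c ^ 2)).const_sub 1
    refine (inner.fun_pow 3 |>.const_sub 1).congr_deriv ?_
    simp only [id, Nat.cast_ofNat, Nat.add_one_sub_one]
    ring
  rcases lt_trichotomy t (c ^ 2) with h | rfl | h
  · rw [tukeySqDeriv, if_pos h.le]
    refine (poly t).congr_of_eventuallyEq ?_
    filter_upwards [eventually_lt_nhds h] with u hu using if_pos hu.le
  · have below : HasDerivWithinAt (tukeySq c) 0 (Set.Iic (c ^ 2)) (c ^ 2) := by
      have : HasDerivWithinAt (tukeySq c) (3 * (1 - c ^ 2 / c ^ 2) ^ 2 / c ^ 2)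
          (Set.Iic (c ^ 2)) (c ^ 2) :=
        (poly _).hasDerivWithinAt.congr (fun u hu => if_pos hu) (if_pos le_rfl)
      simpa [hc2] using this
    have const_above : ∀ u, c ^ 2 ≤ u → tukeySq c u = 1 := fun u hu => by
      unfold tukeySq
      split_ifs with h
      · simp [le_antisymm h hu, hc2]
      · rfl
    have above : HasDerivWithinAt (tukeySq c) 0 (Set.Ici (c ^ 2)) (c ^ 2) :=
      (hasDerivWithinAt_const _ _ 1).congr const_above (const_above _ le_rfl)
    simpa [tukeySqDeriv, Set.Iic_union_Ici, hc2] using below.union above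
  · rw [tukeySqDeriv, if_neg h.not_ge]
    refine (hasDerivAt_const t (1 : ℝ)).congr_of_eventuallyEq ?_
    filter_upwards [eventually_gt_nhds h] with u hu using if_neg hu.not_ge

lemma tukeySq_le_add_tangent (hc : 0 < c) (s t : ℝ) :
    tukeySq c s ≤ tukeySq c t + tukeySqDeriv c t * (s - t) := by
  have hc2 : 0 < c ^ 2 := by positivity
  obtain ⟨a, rfl⟩ : ∃ a, t = c ^ 2 * a := ⟨t / c ^ 2, by field_simp⟩
  obtain ⟨b, rfl⟩ : ∃ b, s = c ^ 2 * b := ⟨s / c ^ 2, by field_simp⟩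
  have hdiv : ∀ x, c ^ 2 * x / c ^ 2 = x := fun x => by field_simp
  have hscale : 3 * (1 - a) ^ 2 / c ^ 2 * (c ^ 2 * b - c ^ 2 * a) = 3 * (1 - a) ^ 2 * (b - a) := by
    field_simp
  simp only [tukeySq, tukeySqDeriv, hdiv, mul_le_iff_le_one_right hc2]
  split_ifs with hb ha ha
  · nlinarith [mul_nonneg (sq_nonneg (b - a)) (show 0 ≤ 3 - 2 * a - b by linarith)]
  · nlinarith [pow_nonneg (show 0 ≤ 1 - b by linarith) 3]
  · nlinarith [mul_nonneg (sq_nonneg (1 - a)) (show 0 ≤ 3 * b - 2 * a - 1 by linarith)]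
  · simp

lemma deriv_tukeySq (hc : 0 < c) : deriv (tukeySq c) = tukeySqDeriv c :=
  funext fun t => (hasDerivAt_tukeySq hc t).deriv

end Tukey

theorem rodessa_irls_descent_tukey_general
    {N p : ℕ} (hp : 1 ≤ p)
    {n : Fin N → ℕ} (hn : ∀ i, 1 ≤ n i)
    {σ1 : Fin p → ℝ} (hσ1 : ∀ j, 0 < σ1 j) {σ2 : ℝ} (hσ2 : 0 < σ2)
    {c1 c2 : ℝ} (hc1 : 0 < c1) (hc2 : 0 < c2)
    (x θ θ' : (i : Fin N) → Fin p → Fin (n i) → ℝ)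
    (hWLS : ∑ i : Fin N, ∑ j : Fin p, ∑ a : Fin (n i),
        rodessaWeight n σ1 σ2 (tukeySq c1) (deriv (tukeySq c1)) (deriv (tukeySq c2))
          (fun i j a => (x i j a - θ i j a) ^ 2) i j * (x i j a - θ' i j a) ^ 2
      ≤ ∑ i : Fin N, ∑ j : Fin p, ∑ a : Fin (n i),
        rodessaWeight n σ1 σ2 (tukeySq c1) (deriv (tukeySq c1)) (deriv (tukeySq c2))
          (fun i j a => (x i j a - θ i j a) ^ 2) i j * (x i j a - θ i j a) ^ 2) :
    Lobj n σ1 σ2 (tukeySq c1) (tukeySq c2) (fun i j a => (x i j a - θ' i j a) ^ 2)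
      ≤ Lobj n σ1 σ2 (tukeySq c1) (tukeySq c2) (fun i j a => (x i j a - θ i j a) ^ 2) := by
  rw [deriv_tukeySq hc1, deriv_tukeySq hc2] at hWLS
  exact Lobj_le_of_sum_weight_mul_le hp hn hσ1 hσ2 (tukeySq_le_add_tangent hc1)
    (tukeySq_le_add_tangent hc2) (tukeySqDeriv_nonneg c2) _ _ hWLS

/-- **Theorem 1 (Tukey version).** If the weighted least squares objective with weights
computed at `θ` does not increase when passing to `θ'`, then the RODESSA objective
decreases: `L(f(θ')) ≤ L(f(θ))`, where `f(θ)_{ia}^{(j)} = (x_{ia}^{(j)} - θ_{ia}^{(j)})²`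
and `ρ₁(t) = ρ_{c₁}(√t)`, `ρ₂(t) = ρ_{c₂}(√t)` with Tukey's biweight. -/
theorem rodessa_irls_descent_tukey
    {N p : ℕ} (hN : 1 ≤ N) (hp : 1 ≤ p)
    {n : Fin N → ℕ} (hn : ∀ i, 1 ≤ n i)
    {σ1 : Fin p → ℝ} (hσ1 : ∀ j, 0 < σ1 j) {σ2 : ℝ} (hσ2 : 0 < σ2)
    {c1 c2 : ℝ} (hc1 : 0 < c1) (hc2 : 0 < c2)
    (x θ θ' : (i : Fin N) → Fin p → Fin (n i) → ℝ)
    (hWLS : ∑ i : Fin N, ∑ j : Fin p, ∑ a : Fin (n i),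
        rodessaWeight n σ1 σ2 (tukeySq c1) (deriv (tukeySq c1)) (deriv (tukeySq c2))
          (fun i j a => (x i j a - θ i j a) ^ 2) i j * (x i j a - θ' i j a) ^ 2
      ≤ ∑ i : Fin N, ∑ j : Fin p, ∑ a : Fin (n i),
        rodessaWeight n σ1 σ2 (tukeySq c1) (deriv (tukeySq c1)) (deriv (tukeySq c2))
          (fun i j a => (x i j a - θ i j a) ^ 2) i j * (x i j a - θ i j a) ^ 2) :
    Lobj n σ1 σ2 (tukeySq c1) (tukeySq c2) (fun i j a => (x i j a - θ' i j a) ^ 2)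
      ≤ Lobj n σ1 σ2 (tukeySq c1) (tukeySq c2) (fun i j a => (x i j a - θ i j a) ^ 2) :=
  rodessa_irls_descent_tukey_general hp hn hσ1 hσ2 hc1 hc2 x θ θ' hWLS
end

section
/- Lemma 1, Tukey instance: Let c1, c2 > 0 and set rho_1(t) = rho_{c1}(sqrt(t)) and rho_2(t) = rho_{c2}(sqrt(t)) for t >= 0, where rho_c is Tukey's biweight. Then the composite objective f -> L(f) is a concave function on the convex set of nonnegative arrays f = (f_{ia}^{(j)}). -/
/-!
On the whole real line `tukeySq c t = 1 - max (1 - t / c ^ 2) 0 ^ 3`: one minus the cube of the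
positive part of a decreasing affine function, hence concave and nondecreasing. Concavity survives
precomposition with linear maps and nonnegative combinations, and a nondecreasing concave function
of a concave function is concave, so `L` is concave on the whole space and a fortiori on the
convex cone of nonnegative arrays.
-/

open scoped BigOperators

open Set

section ConcaveOn

variable {𝕜 E β α ι : Type*} [Semiring 𝕜] [PartialOrder 𝕜] [AddCommMonoid E] [SMul 𝕜 E]
  [AddCommMonoid β] [PartialOrder β] [AddCommMonoid α] [PartialOrder α] [SMul 𝕜 α]
  {s : Set E}

/-- Unlike `ConcaveOn.comp`, this asks nothing of `g` on the image `f '' s`, which need not be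
convex. -/
theorem ConcaveOn.comp_of_monotone [SMul 𝕜 β] {g : β → α} {f : E → β}
    (hg : ConcaveOn 𝕜 univ g) (hg_mono : Monotone g) (hf : ConcaveOn 𝕜 s f) :
    ConcaveOn 𝕜 s (g ∘ f) :=
  ⟨hf.1, fun _ hx _ hy _ _ ha hb hab =>
    (hg.2 trivial trivial ha hb hab).trans (hg_mono (hf.2 hx hy ha hb hab))⟩

theorem concaveOn_sum [IsOrderedAddMonoid β] [Module 𝕜 β] (t : Finset ι) {f : ι → E → β}
    (hs : Convex 𝕜 s) (hf : ∀ i ∈ t, ConcaveOn 𝕜 s (f i)) :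
    ConcaveOn 𝕜 s fun x => ∑ i ∈ t, f i x := by
  classical
  induction t using Finset.induction_on with
  | empty => simpa using concaveOn_const (0 : β) hs
  | insert i t hi ih =>
    simp_rw [Finset.sum_insert hi]
    exact (hf i (Finset.mem_insert_self i t)).add
      (ih fun j hj => hf j (Finset.mem_insert_of_mem hj))

end ConcaveOn

theorem ConcaveOn.div_const {𝕜 E : Type*} [Field 𝕜] [LinearOrder 𝕜] [IsStrictOrderedRing 𝕜]
    [AddCommMonoid E] [SMul 𝕜 E] {s : Set E} {f : E → 𝕜}
    (hf : ConcaveOn 𝕜 s f) {c : 𝕜} (hc : 0 ≤ c) : ConcaveOn 𝕜 s fun x => f x / c := by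
  simpa only [div_eq_inv_mul, smul_eq_mul] using hf.smul (inv_nonneg.2 hc)

theorem concaveOn_one_sub_max_zero_pow (k : ℕ) : ConcaveOn ℝ univ fun u : ℝ => 1 - max u 0 ^ k :=
  (concaveOn_const 1 convex_univ).sub
    (((convexOn_id convex_univ).sup (convexOn_const 0 convex_univ)).pow
      (fun _ _ => le_sup_right) k)

theorem tukeySq_eq_one_sub_max_pow {c : ℝ} (hc : c ≠ 0) (t : ℝ) :
    tukeySq c t = 1 - max (1 - t / c ^ 2) 0 ^ 3 := by
  have hc2 : 0 < c ^ 2 := by positivity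
  unfold tukeySq
  split_ifs with h
  · rw [max_eq_left (sub_nonneg.2 ((div_le_one hc2).2 h))]
  · rw [max_eq_right (sub_nonpos.2 ((one_le_div hc2).2 (not_le.1 h).le))]
    norm_num

theorem concaveOn_tukeySq {c : ℝ} (hc : c ≠ 0) : ConcaveOn ℝ univ (tukeySq c) :=
  ((concaveOn_one_sub_max_zero_pow 3).comp_affineMap
    (AffineMap.lineMap (1 : ℝ) (1 - (c ^ 2)⁻¹))).congr fun t _ => by
    simp only [Function.comp_apply, AffineMap.lineMap_apply_ring', tukeySq_eq_one_sub_max_pow hc]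
    ring_nf

theorem monotone_tukeySq {c : ℝ} (hc : c ≠ 0) : Monotone (tukeySq c) := by
  intro x y hxy
  simp only [tukeySq_eq_one_sub_max_pow hc]
  gcongr

theorem concaveOn_Lobj {N p : ℕ} (n : Fin N → ℕ) (σ1 : Fin p → ℝ) (σ2 : ℝ) {ρ1 ρ2 : ℝ → ℝ}
    (hρ1 : ConcaveOn ℝ univ ρ1) (hρ2 : ConcaveOn ℝ univ ρ2) (hρ2_mono : Monotone ρ2) :
    ConcaveOn ℝ univ (Lobj n σ1 σ2 ρ1 ρ2) := by
  have hcoord (i : Fin N) (j : Fin p) :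
      ConcaveOn ℝ univ fun f : (i : Fin N) → Fin p → Fin (n i) → ℝ =>
        ρ1 ((∑ a, f i j a) / ((n i : ℝ) * σ1 j ^ 2)) := by
    have hlin : IsLinearMap ℝ fun f : (i : Fin N) → Fin p → Fin (n i) → ℝ =>
        (∑ a, f i j a) / ((n i : ℝ) * σ1 j ^ 2) :=
      ⟨fun f g => by simp only [Pi.add_apply, Finset.sum_add_distrib, add_div],
       fun c f => by simp only [Pi.smul_apply, smul_eq_mul, ← Finset.mul_sum, mul_div_assoc]⟩
    exact hρ1.comp_linearMap hlin.mk'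
  refine concaveOn_sum _ convex_univ fun i _ => ?_
  refine (hρ2.comp_of_monotone hρ2_mono ?_).smul (by positivity)
  refine ConcaveOn.div_const ?_ (by positivity)
  exact concaveOn_sum _ convex_univ fun j _ => (hcoord i j).smul (by positivity)

theorem rodessa_objective_concave_tukey_general
    {N p : ℕ}
    {n : Fin N → ℕ}
    {σ1 : Fin p → ℝ} {σ2 : ℝ}
    {c1 c2 : ℝ} (hc1 : 0 < c1) (hc2 : 0 < c2) :
    ConcaveOn ℝ
      {f : (i : Fin N) → Fin p → Fin (n i) → ℝ | ∀ i j a, 0 ≤ f i j a}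
      (Lobj n σ1 σ2 (tukeySq c1) (tukeySq c2)) :=
  (concaveOn_Lobj n σ1 σ2 (concaveOn_tukeySq hc1.ne') (concaveOn_tukeySq hc2.ne')
    (monotone_tukeySq hc2.ne')).subset (subset_univ _) (convex_Ici 0)

/-- **Lemma 1, Tukey instance.** With `ρ₁(t) = ρ_{c₁}(√t)` and `ρ₂(t) = ρ_{c₂}(√t)`,
where `ρ_c` is Tukey's biweight, the composite objective `f ↦ L(f)` is concave on the
convex set of nonnegative arrays `f = (f_{ia}^{(j)})`. -/
theorem rodessa_objective_concave_tukey
    {N p : ℕ} (hN : 1 ≤ N) (hp : 1 ≤ p)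
    {n : Fin N → ℕ} (hn : ∀ i, 1 ≤ n i)
    {σ1 : Fin p → ℝ} (hσ1 : ∀ j, 0 < σ1 j) {σ2 : ℝ} (hσ2 : 0 < σ2)
    {c1 c2 : ℝ} (hc1 : 0 < c1) (hc2 : 0 < c2) :
    ConcaveOn ℝ
      {f : (i : Fin N) → Fin p → Fin (n i) → ℝ | ∀ i j a, 0 ≤ f i j a}
      (Lobj n σ1 σ2 (tukeySq c1) (tukeySq c2)) :=
  rodessa_objective_concave_tukey_general hc1 hc2
end

section
/- One alternating least squares sweep decreases the weighted least squares objective: let X and W be real L x K matrices with all entries of W nonnegative, and let U_t (L x q) and V_t (K x q) be given. For each k = 1, ..., K let W_k be the L x L diagonal matrix whose diagonal is the k-th column of W, and for each l = 1, ..., L let W^l be the K x K diagonal matrix whose diagonal is the l-th row of W. Suppose all matrices U_t^T W_k U_t and V_{t+1}^T W^l V_{t+1} below are invertible, and define V_{t+1} rowwise by v^k_{t+1} = (U_t^T W_k U_t)^{-1} U_t^T W_k X_k for k = 1, ..., K (where X_k is the k-th column of X and v^k_{t+1} is the k-th row of V_{t+1}), and then define U_{t+1} rowwise by u^l_{t+1}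 = (V_{t+1}^T W^l V_{t+1})^{-1} V_{t+1}^T W^l X^l for l = 1, ..., L (where X^l is the l-th row of X and u^l_{t+1} is the l-th row of U_{t+1}). Then sum_{l=1}^L sum_{k=1}^K w_{lk} ( X_{lk} - (U_{t+1} V_{t+1}^T)_{lk} )^2 <= sum_{l=1}^L sum_{k=1}^K w_{lk} ( X_{lk} - (U_t V_t^T)_{lk} )^2. -/
open Matrix

/-- Key lemma: the normal-equation solution minimizes a weighted least squares
objective. -/
lemma wls_min {n m : ℕ} (M : Matrix (Fin n) (Fin m) ℝ) (d x : Fin n → ℝ)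
    (hd : ∀ i, 0 ≤ d i)
    (hinv : IsUnit (Mᵀ * Matrix.diagonal d * M))
    (v u : Fin m → ℝ)
    (hv : v = (Mᵀ * Matrix.diagonal d * M)⁻¹ *ᵥ ((Mᵀ * Matrix.diagonal d) *ᵥ x)) :
    ∑ i, d i * (x i - (M *ᵥ v) i) ^ 2 ≤ ∑ i, d i * (x i - (M *ᵥ u) i) ^ 2 := by
  set A := Mᵀ * Matrix.diagonal d * M with hA
  have hnormal : A *ᵥ v = (Mᵀ * Matrix.diagonal d) *ᵥ x := by
    rw [hv, Matrix.mulVec_mulVec,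
      Matrix.mul_nonsing_inv _ ((Matrix.isUnit_iff_isUnit_det A).mp hinv),
      Matrix.one_mulVec]
  set r := fun i => d i * (x i - (M *ᵥ v) i) with hr
  have hrdiag : r = Matrix.diagonal d *ᵥ (x - M *ᵥ v) := by
    funext i
    simp [hr, Matrix.mulVec_diagonal]
  have hzero : Mᵀ *ᵥ r = 0 := by
    rw [hrdiag, Matrix.mulVec_mulVec, Matrix.mulVec_sub, Matrix.mulVec_mulVec,
      ← hA, hnormal, sub_self]
  have horth : ∀ w : Fin m → ℝ, ∑ i, r i * (M *ᵥ w) i = 0 := by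
    intro w
    have h1 : r ⬝ᵥ (M *ᵥ w) = (r ᵥ* M) ⬝ᵥ w := Matrix.dotProduct_mulVec _ _ _
    have h2 : r ᵥ* M = 0 := by
      rw [← Matrix.mulVec_transpose, hzero]
    have : r ⬝ᵥ (M *ᵥ w) = 0 := by rw [h1, h2]; simp
    simpa [dotProduct] using this
  have hpt : ∀ i, d i * (x i - (M *ᵥ u) i) ^ 2
      = d i * (x i - (M *ᵥ v) i) ^ 2 + 2 * (r i * (M *ᵥ (v - u)) i)
        + d i * ((M *ᵥ (v - u)) i) ^ 2 := by
    intro i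
    have hMi : (M *ᵥ (v - u)) i = (M *ᵥ v) i - (M *ᵥ u) i := by
      rw [Matrix.mulVec_sub]; rfl
    simp only [hr, hMi]; ring
  have hsum : ∑ i, d i * (x i - (M *ᵥ u) i) ^ 2
      = ∑ i, d i * (x i - (M *ᵥ v) i) ^ 2
        + 2 * ∑ i, r i * (M *ᵥ (v - u)) i
        + ∑ i, d i * ((M *ᵥ (v - u)) i) ^ 2 := by
    rw [Finset.mul_sum, ← Finset.sum_add_distrib, ← Finset.sum_add_distrib]
    exact Finset.sum_congr rfl fun i _ => hpt i
  have hnonneg : 0 ≤ ∑ i, d i * ((M *ᵥ (v - u)) i) ^ 2 :=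
    Finset.sum_nonneg fun i _ => mul_nonneg (hd i) (sq_nonneg _)
  rw [hsum, horth (v - u)]
  linarith

/-- **One alternating least squares sweep decreases the weighted LS objective.**
Given nonnegative weights `W`, define `V_{t+1}` rowwise by
`v^k_{t+1} = (Uₜᵀ W_k Uₜ)⁻¹ Uₜᵀ W_k X_k` and then `U_{t+1}` rowwise by
`u^l_{t+1} = (V_{t+1}ᵀ W^l V_{t+1})⁻¹ V_{t+1}ᵀ W^l X^l`, where `W_k = diag` of the
`k`-th column of `W` and `W^l = diag` of the `l`-th row of `W`. If all the matrices
being inverted are invertible, then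
`∑_{l,k} w_{lk} (X_{lk} - (U_{t+1}V_{t+1}ᵀ)_{lk})² ≤
 ∑_{l,k} w_{lk} (X_{lk} - (UₜVₜᵀ)_{lk})²`. -/
theorem als_sweep_decreases_objective
    (L K q : ℕ) (hL : 1 ≤ L) (hK : 1 ≤ K) (hq : 1 ≤ q)
    (X W : Matrix (Fin L) (Fin K) ℝ) (hW : ∀ l k, 0 ≤ W l k)
    (Ut : Matrix (Fin L) (Fin q) ℝ) (Vt : Matrix (Fin K) (Fin q) ℝ)
    (V1 : Matrix (Fin K) (Fin q) ℝ) (U1 : Matrix (Fin L) (Fin q) ℝ)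
    (hinvV : ∀ k : Fin K, IsUnit (Utᵀ * Matrix.diagonal (fun l => W l k) * Ut))
    (hV1 : ∀ k : Fin K, V1 k =
      (Utᵀ * Matrix.diagonal (fun l => W l k) * Ut)⁻¹ *ᵥ
        ((Utᵀ * Matrix.diagonal (fun l => W l k)) *ᵥ (fun l => X l k)))
    (hinvU : ∀ l : Fin L, IsUnit (V1ᵀ * Matrix.diagonal (fun k => W l k) * V1))
    (hU1 : ∀ l : Fin L, U1 l =
      (V1ᵀ * Matrix.diagonal (fun k => W l k) * V1)⁻¹ *ᵥ
        ((V1ᵀ * Matrix.diagonal (fun k => W l k)) *ᵥ (fun k => X l k))) :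
    ∑ l, ∑ k, W l k * (X l k - (U1 * V1ᵀ) l k) ^ 2
      ≤ ∑ l, ∑ k, W l k * (X l k - (Ut * Vtᵀ) l k) ^ 2 := by
  have hAB : ∀ (A : Matrix (Fin L) (Fin q) ℝ) (B : Matrix (Fin K) (Fin q) ℝ)
      (l : Fin L) (k : Fin K),
      (A * Bᵀ) l k = (B *ᵥ A l) k ∧ (A * Bᵀ) l k = (A *ᵥ B k) l := by
    intro A B l k
    constructor
    · simp [Matrix.mul_apply, Matrix.mulVec, dotProduct, mul_comm]
    · simp [Matrix.mul_apply, Matrix.mulVec, dotProduct]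
  -- Step 1: updating U decreases the objective (with V1 fixed).
  have step1 : ∑ l, ∑ k, W l k * (X l k - (U1 * V1ᵀ) l k) ^ 2
      ≤ ∑ l, ∑ k, W l k * (X l k - (Ut * V1ᵀ) l k) ^ 2 := by
    apply Finset.sum_le_sum
    intro l _
    have h := wls_min V1 (fun k => W l k) (fun k => X l k) (fun k => hW l k)
      (hinvU l) (U1 l) (Ut l) (hU1 l)
    calc ∑ k, W l k * (X l k - (U1 * V1ᵀ) l k) ^ 2
        = ∑ k, W l k * (X l k - (V1 *ᵥ U1 l) k) ^ 2 := by
          exact Finset.sum_congr rfl fun k _ => by rw [(hAB U1 V1 l k).1]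
      _ ≤ ∑ k, W l k * (X l k - (V1 *ᵥ Ut l) k) ^ 2 := h
      _ = ∑ k, W l k * (X l k - (Ut * V1ᵀ) l k) ^ 2 := by
          exact Finset.sum_congr rfl fun k _ => by rw [(hAB Ut V1 l k).1]
  -- Step 2: updating V decreases the objective (with Ut fixed).
  have step2 : ∑ l, ∑ k, W l k * (X l k - (Ut * V1ᵀ) l k) ^ 2
      ≤ ∑ l, ∑ k, W l k * (X l k - (Ut * Vtᵀ) l k) ^ 2 := by
    rw [Finset.sum_comm, Finset.sum_comm (s := Finset.univ) (t := Finset.univ)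
      (f := fun l k => W l k * (X l k - (Ut * Vtᵀ) l k) ^ 2)]
    apply Finset.sum_le_sum
    intro k _
    have h := wls_min Ut (fun l => W l k) (fun l => X l k) (fun l => hW l k)
      (hinvV k) (V1 k) (Vt k) (hV1 k)
    calc ∑ l, W l k * (X l k - (Ut * V1ᵀ) l k) ^ 2
        = ∑ l, W l k * (X l k - (Ut *ᵥ V1 k) l) ^ 2 := by
          exact Finset.sum_congr rfl fun l _ => by rw [(hAB Ut V1 l k).2]
      _ ≤ ∑ l, W l k * (X l k - (Ut *ᵥ Vt k) l) ^ 2 := h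
      _ = ∑ l, W l k * (X l k - (Ut * Vtᵀ) l k) ^ 2 := by
          exact Finset.sum_congr rfl fun l _ => by rw [(hAB Ut Vt l k).2]
  exact le_trans step1 step2
end
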